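/- arXiv:1202.2431 — 2 statements merged into one kernel-verified Lean document; each statement's English description precedes it below -/
import Mathlib

section
/- Let f ∈ P([a,b]) (i.e., f nonnegative with f(λx+(1-λ)y) ≤ f(x)+f(y) for all λ ∈ [0,1]), f integrable on [a,b] with a < b, and α > 0. Then f((a+b)/2) ≤ (Γ(α+1)/(b-a)^α) [J_{a+}^α f(b) + J_{b-}^α f(a)] ≤ 2(f(a)+f(b)). -/
/-!
Writing `h t = f (a + b - t) + f t`, the reflection `t ↦ a + b - t` turns the sum of the two
fractional integrals into `∫ (t - a) ^ (α - 1) * h t`. The `P`-inequality gives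
`f ((a + b) / 2) ≤ h t` (take `λ = 1/2`) and `h t ≤ 2 (f a + f b)` (write `t` as a convex
combination of `a` and `b`), and the weight integrates to `(b - a) ^ α / α`, which
`Γ (α + 1) = α Γ α` cancels against the normalising constant.
-/

open MeasureTheory intervalIntegral Set

theorem Set.add_sub_mem_Icc {G : Type*} [AddCommGroup G] [PartialOrder G]
    [IsOrderedAddMonoid G] {a b t : G} (ht : t ∈ Icc a b) : a + b - t ∈ Icc a b := by
  rwa [sub_mem_Icc_iff_right, add_sub_cancel_right, add_sub_cancel_left]

def PFunctionOn (s : Set ℝ) (f : ℝ → ℝ) : Prop :=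
  ∀ x ∈ s, ∀ y ∈ s, ∀ l : ℝ, 0 ≤ l → l ≤ 1 →
    f (l * x + (1 - l) * y) ≤ f x + f y

namespace PFunctionOn

variable {s : Set ℝ} {f : ℝ → ℝ} {x y t : ℝ}

theorem nonneg (hf : PFunctionOn s f) (hx : x ∈ s) : 0 ≤ f x := by
  have h := hf x hx x hx 0 le_rfl zero_le_one
  rw [zero_mul, sub_zero, one_mul, zero_add] at h
  linarith

theorem le_add_of_mem_segment (hf : PFunctionOn s f) (hx : x ∈ s) (hy : y ∈ s)
    (ht : t ∈ segment ℝ x y) : f t ≤ f x + f y := by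
  obtain ⟨p, q, hp, hq, hpq, rfl⟩ := ht
  obtain rfl : q = 1 - p := by linarith
  exact hf x hx y hy p hp (by linarith)

theorem midpoint_le_add (hf : PFunctionOn s f) (hx : x ∈ s) (hy : y ∈ s) :
    f ((x + y) / 2) ≤ f x + f y := by
  have h := hf x hx y hy (1 / 2) (by norm_num) (by norm_num)
  rwa [show 1 / 2 * x + (1 - 1 / 2) * y = (x + y) / 2 by ring] at h

variable {a b : ℝ}

theorem abs_le_add_of_mem_Icc (hf : PFunctionOn (Icc a b) f) (hab : a ≤ b)
    (ht : t ∈ Icc a b) : |f t| ≤ f a + f b := by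
  rw [abs_of_nonneg (hf.nonneg ht)]
  rw [← segment_eq_Icc hab] at ht
  exact hf.le_add_of_mem_segment (left_mem_Icc.2 hab) (right_mem_Icc.2 hab) ht

theorem midpoint_le_add_reflect (hf : PFunctionOn (Icc a b) f) (ht : t ∈ Icc a b) :
    f ((a + b) / 2) ≤ f (a + b - t) + f t := by
  simpa only [sub_add_cancel] using hf.midpoint_le_add (add_sub_mem_Icc ht) ht

theorem add_reflect_le (hf : PFunctionOn (Icc a b) f) (hab : a ≤ b) (ht : t ∈ Icc a b) :
    f (a + b - t) + f t ≤ 2 * (f a + f b) := by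
  linarith [le_abs_self (f t), le_abs_self (f (a + b - t)), hf.abs_le_add_of_mem_Icc hab ht,
    hf.abs_le_add_of_mem_Icc hab (add_sub_mem_Icc ht)]

end PFunctionOn

theorem intervalIntegrable_sub_rpow {r : ℝ} (hr : -1 < r) (a b c : ℝ) :
    IntervalIntegrable (fun t => (t - c) ^ r) volume a b := by
  simpa using
    (intervalIntegrable_rpow' (a := a - c) (b := b - c) hr).comp_sub_right c

theorem IntervalIntegrable.comp_add_sub {g : ℝ → ℝ} {a b : ℝ}
    (hg : IntervalIntegrable g volume a b) :
    IntervalIntegrable (fun t => g (a + b - t)) volume a b := by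
  simpa using (hg.comp_sub_left (a + b)).symm

theorem IntervalIntegrable.mul_of_abs_le {w g : ℝ → ℝ} {a b C : ℝ}
    (hw : IntervalIntegrable w volume a b) (hg : IntervalIntegrable g volume a b)
    (hC : ∀ t ∈ uIcc a b, |g t| ≤ C) :
    IntervalIntegrable (fun t => w t * g t) volume a b := by
  rw [intervalIntegrable_iff] at hw hg ⊢
  exact hw.mul_bdd hg.aestronglyMeasurable
    (ae_restrict_of_forall_mem measurableSet_uIoc fun t ht => hC t (uIoc_subset_uIcc ht))

theorem intervalIntegral.integral_comp_add_sub (g : ℝ → ℝ) (a b : ℝ) :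
    ∫ t in a..b, g (a + b - t) = ∫ t in a..b, g t := by
  rw [integral_comp_sub_left, add_sub_cancel_right, add_sub_cancel_left]

theorem intervalIntegral.integral_sub_rpow_sub_one {α : ℝ} (hα : 0 < α) (a b : ℝ) :
    ∫ t in a..b, (t - a) ^ (α - 1) = (b - a) ^ α / α := by
  rw [integral_comp_sub_right (fun x => x ^ (α - 1)), sub_self,
    integral_rpow (Or.inl (by linarith)), sub_add_cancel, Real.zero_rpow hα.ne', sub_zero]

theorem intervalIntegral.const_mul_integral_le_integral_mul_le {w g : ℝ → ℝ} {a b c C : ℝ}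
    (hab : a ≤ b) (hw : ∀ t ∈ Icc a b, 0 ≤ w t) (hwi : IntervalIntegrable w volume a b)
    (hwg : IntervalIntegrable (fun t => w t * g t) volume a b)
    (hc : ∀ t ∈ Icc a b, c ≤ g t) (hC : ∀ t ∈ Icc a b, g t ≤ C) :
    c * ∫ t in a..b, w t ≤ ∫ t in a..b, w t * g t ∧
      ∫ t in a..b, w t * g t ≤ C * ∫ t in a..b, w t := by
  rw [← integral_const_mul, ← integral_const_mul]
  constructor
  · refine integral_mono_on hab (hwi.const_mul c) hwg fun t ht => ?_
    rw [mul_comm]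
    exact mul_le_mul_of_nonneg_left (hc t ht) (hw t ht)
  · refine integral_mono_on hab hwg (hwi.const_mul C) fun t ht => ?_
    rw [mul_comm C]
    exact mul_le_mul_of_nonneg_left (hC t ht) (hw t ht)

theorem fractional_P_function_general (a b α : ℝ) (f : ℝ → ℝ)
    (hab : a < b) (hα : 0 < α)
    (hP : ∀ x ∈ Set.Icc a b, ∀ y ∈ Set.Icc a b, ∀ l : ℝ, 0 ≤ l → l ≤ 1 →
      f (l * x + (1 - l) * y) ≤ f x + f y)
    (hint : IntervalIntegrable f MeasureTheory.volume a b) :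
    f ((a + b) / 2) ≤ Real.Gamma (α + 1) / (b - a) ^ α *
      ((1 / Real.Gamma α) * (∫ t in a..b, (b - t) ^ (α - 1) * f t) +
       (1 / Real.Gamma α) * (∫ t in a..b, (t - a) ^ (α - 1) * f t)) ∧
    Real.Gamma (α + 1) / (b - a) ^ α *
      ((1 / Real.Gamma α) * (∫ t in a..b, (b - t) ^ (α - 1) * f t) +
       (1 / Real.Gamma α) * (∫ t in a..b, (t - a) ^ (α - 1) * f t)) ≤
      2 * (f a + f b) := by
  have hf : PFunctionOn (Icc a b) f := hP
  have hw := intervalIntegrable_sub_rpow (by linarith : -1 < α - 1) a b a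
  have hbound : ∀ t ∈ uIcc a b, |f t| ≤ f a + f b := fun t ht =>
    hf.abs_le_add_of_mem_Icc hab.le (uIcc_of_le hab.le ▸ ht)
  have hwf := hw.mul_of_abs_le hint hbound
  have hwf_reflect := hw.mul_of_abs_le hint.comp_add_sub fun t ht =>
    hbound _ (uIcc_of_le hab.le ▸ add_sub_mem_Icc (uIcc_of_le hab.le ▸ ht))
  have hsum : (∫ t in a..b, (b - t) ^ (α - 1) * f t) + ∫ t in a..b, (t - a) ^ (α - 1) * f t =
      ∫ t in a..b, (t - a) ^ (α - 1) * (f (a + b - t) + f t) := by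
    rw [← integral_comp_add_sub (fun t => (b - t) ^ (α - 1) * f t)]
    simp only [show ∀ t, b - (a + b - t) = t - a from fun t => by ring, mul_add]
    exact (integral_add hwf_reflect hwf).symm
  obtain ⟨hlower, hupper⟩ := const_mul_integral_le_integral_mul_le hab.le
    (fun t ht => Real.rpow_nonneg (sub_nonneg.2 ht.1) _) hw
    (by simpa only [mul_add] using hwf_reflect.add hwf)
    (fun t => hf.midpoint_le_add_reflect) (fun t => hf.add_reflect_le hab.le)
  rw [integral_sub_rpow_sub_one hα, ← hsum] at hlower hupper
  have hW : 0 < (b - a) ^ α / α := div_pos (Real.rpow_pos_of_pos (sub_pos.2 hab) α) hα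
  have hnormalise : ∀ I₁ I₂ : ℝ, Real.Gamma (α + 1) / (b - a) ^ α *
      (1 / Real.Gamma α * I₁ + 1 / Real.Gamma α * I₂) =
        (I₁ + I₂) / ((b - a) ^ α / α) := by
    intro I₁ I₂
    rw [Real.Gamma_add_one hα.ne']
    field_simp [(Real.Gamma_pos_of_pos hα).ne']
  rw [hnormalise, le_div_iff₀ hW, div_le_iff₀ hW]
  exact ⟨hlower, hupper⟩

theorem fractional_P_function (a b α : ℝ) (f : ℝ → ℝ)
    (hab : a < b) (hα : 0 < α)
    (hnonneg : ∀ x ∈ Set.Icc a b, 0 ≤ f x)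
    (hP : ∀ x ∈ Set.Icc a b, ∀ y ∈ Set.Icc a b, ∀ l : ℝ, 0 ≤ l → l ≤ 1 →
      f (l * x + (1 - l) * y) ≤ f x + f y)
    (hint : IntervalIntegrable f MeasureTheory.volume a b) :
    f ((a + b) / 2) ≤ Real.Gamma (α + 1) / (b - a) ^ α *
      ((1 / Real.Gamma α) * (∫ t in a..b, (b - t) ^ (α - 1) * f t) +
       (1 / Real.Gamma α) * (∫ t in a..b, (t - a) ^ (α - 1) * f t)) ∧
    Real.Gamma (α + 1) / (b - a) ^ α *
      ((1 / Real.Gamma α) * (∫ t in a..b, (b - t) ^ (α - 1) * f t) +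
       (1 / Real.Gamma α) * (∫ t in a..b, (t - a) ^ (α - 1) * f t)) ≤
      2 * (f a + f b) :=
  fractional_P_function_general a b α f hab hα hP hint
end

section
/- Let h : (0,1) → (0,∞), f ∈ SX(h,[a,b]) integrable, a < b, α > 0, and t ↦ t^{α-1}(h(t)+h(1-t)) integrable on (0,1). Then (1/(α h(1/2))) f((a+b)/2) ≤ (Γ(α)/(b-a)^α)[J_{a+}^α f(b) + J_{b-}^α f(a)] ≤ (f(a)+f(b)) ∫_0^1 t^{α-1}(h(t)+h(1-t)) dt. -/
/-!
Substituting `t = u b + (1 - u) a` in both fractional integrals turns the middle term into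
`∫₀¹ u^(α-1) (f (u a + (1-u) b) + f (u b + (1-u) a)) du`. The two points in the bracket are
symmetric about `(a + b) / 2`, so h-convexity at `λ = 1/2` bounds the bracket below by
`f ((a + b) / 2) / h (1/2)`, while h-convexity between the endpoints bounds it above by
`(h u + h (1 - u)) (f a + f b)`. Integrating against `u^(α-1)`, whose integral is `1 / α`,
gives both inequalities.
-/

open MeasureTheory Set intervalIntegral Interval

theorem Convex.mul_add_mul_mem {s : Set ℝ} (hs : Convex ℝ s) {x y l : ℝ} (hx : x ∈ s)
    (hy : y ∈ s) (hl₀ : 0 ≤ l) (hl₁ : l ≤ 1) : l * x + (1 - l) * y ∈ s :=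
  hs hx hy hl₀ (sub_nonneg.2 hl₁) (add_sub_cancel l 1)

theorem IntervalIntegrable.of_nonneg_of_le_Ioo {g B : ℝ → ℝ} {a b : ℝ} (hab : a ≤ b)
    (hB : IntervalIntegrable B volume a b) (hg : AEStronglyMeasurable g (volume.restrict (Ι a b)))
    (h₀ : ∀ x ∈ Ioo a b, 0 ≤ g x) (hle : ∀ x ∈ Ioo a b, g x ≤ B x) :
    IntervalIntegrable g volume a b := by
  refine hB.mono_fun' hg ?_
  rw [uIoc_of_le hab, ← Measure.restrict_congr_set Ioo_ae_eq_Ioc]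
  filter_upwards [ae_restrict_mem measurableSet_Ioo] with x hx
  rw [Real.norm_of_nonneg (h₀ x hx)]
  exact hle x hx

theorem IntervalIntegrable.comp_segment {f : ℝ → ℝ} {a b : ℝ} (hab : a ≠ b)
    (hf : IntervalIntegrable f volume a b) :
    IntervalIntegrable (fun u => f (u * b + (1 - u) * a)) volume 0 1 := by
  have hc : b - a ≠ 0 := sub_ne_zero.2 hab.symm
  have := (hf.comp_add_left a).comp_mul_left (c := b - a)
  rw [sub_self, zero_div, div_self hc] at this
  convert this using 3 with u
  ring

section Substitution

variable {a b : ℝ} (α : ℝ) (f : ℝ → ℝ)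

theorem integral_sub_lower_rpow_mul (hab : a < b) :
    ∫ t in a..b, (t - a) ^ (α - 1) * f t =
      (b - a) ^ α * ∫ u in (0 : ℝ)..1, u ^ (α - 1) * f (u * b + (1 - u) * a) := by
  have hc : 0 < b - a := sub_pos.2 hab
  have hsubst := integral_comp_add_mul (fun t => (t - a) ^ (α - 1) * f t) (a := 0) (b := 1)
    hc.ne' a
  have hscale : EqOn (fun u => (a + (b - a) * u - a) ^ (α - 1) * f (a + (b - a) * u))
      (fun u => (b - a) ^ (α - 1) * (u ^ (α - 1) * f (u * b + (1 - u) * a))) [[0, 1]] := by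
    intro u hu
    rw [uIcc_of_le zero_le_one] at hu
    simp only
    rw [add_sub_cancel_left, Real.mul_rpow hc.le hu.1,
      show a + (b - a) * u = u * b + (1 - u) * a by ring, mul_assoc]
  rw [integral_congr hscale, intervalIntegral.integral_const_mul] at hsubst
  simp only [mul_zero, add_zero, mul_one, add_sub_cancel, smul_eq_mul] at hsubst
  rw [Real.rpow_sub_one hc.ne', div_eq_inv_mul, mul_assoc] at hsubst
  exact (mul_left_cancel₀ (inv_ne_zero hc.ne') hsubst).symm

theorem integral_upper_sub_rpow_mul (hab : a < b) :
    ∫ t in a..b, (b - t) ^ (α - 1) * f t =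
      (b - a) ^ α * ∫ u in (0 : ℝ)..1, u ^ (α - 1) * f (u * a + (1 - u) * b) := by
  have hreflect := integral_comp_sub_left (fun t => (t - a) ^ (α - 1) * f (a + b - t))
    (a := a) (b := b) (a + b)
  simp only [add_sub_cancel_right, add_sub_cancel_left, sub_sub_cancel,
    show ∀ x, a + b - x - a = b - x from fun x => by ring] at hreflect
  rw [hreflect, integral_sub_lower_rpow_mul α _ hab]
  congr 3 with u
  ring_nf

theorem integral_upper_sub_rpow_mul_add_integral_sub_lower_rpow_mul (hab : a < b)
    (hq : IntervalIntegrable (fun u => u ^ (α - 1) * f (u * a + (1 - u) * b)) volume 0 1)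
    (hp : IntervalIntegrable (fun u => u ^ (α - 1) * f (u * b + (1 - u) * a)) volume 0 1) :
    (∫ t in a..b, (b - t) ^ (α - 1) * f t) + ∫ t in a..b, (t - a) ^ (α - 1) * f t =
      (b - a) ^ α * ∫ u in (0 : ℝ)..1, u ^ (α - 1) * f (u * a + (1 - u) * b) +
        u ^ (α - 1) * f (u * b + (1 - u) * a) := by
  rw [integral_upper_sub_rpow_mul α f hab, integral_sub_lower_rpow_mul α f hab,
    integral_add hq hp, mul_add]

end Substitution

theorem integral_zero_one_rpow_sub_one {α : ℝ} (hα : 0 < α) :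
    ∫ u in (0 : ℝ)..1, u ^ (α - 1) = 1 / α := by
  rw [integral_rpow (Or.inl (by linarith)), sub_add_cancel, Real.one_rpow,
    Real.zero_rpow hα.ne', sub_zero]

/-- The class `SX(h, s)` of nonnegative h-convex functions on `s`. -/
def HConvexOn (h : ℝ → ℝ) (s : Set ℝ) (f : ℝ → ℝ) : Prop :=
  (∀ x ∈ s, 0 ≤ f x) ∧
    ∀ x ∈ s, ∀ y ∈ s, ∀ l : ℝ, 0 < l → l < 1 →
      f (l * x + (1 - l) * y) ≤ h l * f x + h (1 - l) * f y

namespace HConvexOn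

variable {h f : ℝ → ℝ} {s : Set ℝ} {x y l : ℝ}

theorem apply_midpoint_le (hf : HConvexOn h s f) (hx : x ∈ s) (hy : y ∈ s) :
    f ((x + y) / 2) ≤ h (1 / 2) * (f x + f y) := by
  have := hf.2 x hx y hy (1 / 2) (by norm_num) (by norm_num)
  rw [show (1 : ℝ) - 1 / 2 = 1 / 2 by norm_num, ← mul_add, ← mul_add] at this
  convert this using 2
  ring

theorem midpoint_le_apply_combo_add_apply_combo (hf : HConvexOn h s f) (hs : Convex ℝ s)
    (hx : x ∈ s) (hy : y ∈ s) (hl₀ : 0 ≤ l) (hl₁ : l ≤ 1) :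
    f ((x + y) / 2) ≤ h (1 / 2) * (f (l * x + (1 - l) * y) + f (l * y + (1 - l) * x)) := by
  have := hf.apply_midpoint_le (hs.mul_add_mul_mem hx hy hl₀ hl₁)
    (hs.mul_add_mul_mem hy hx hl₀ hl₁)
  convert this using 2
  ring

theorem apply_combo_add_apply_combo_le (hf : HConvexOn h s f) (hx : x ∈ s) (hy : y ∈ s)
    (hl₀ : 0 < l) (hl₁ : l < 1) :
    f (l * x + (1 - l) * y) + f (l * y + (1 - l) * x) ≤ (h l + h (1 - l)) * (f x + f y) := by
  linarith [hf.2 x hx y hy l hl₀ hl₁, hf.2 y hy x hx l hl₀ hl₁]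

theorem apply_combo_le (hf : HConvexOn h s f) (hh : ∀ l : ℝ, 0 < l → l < 1 → 0 < h l)
    (hx : x ∈ s) (hy : y ∈ s) (hl₀ : 0 < l) (hl₁ : l < 1) :
    f (l * x + (1 - l) * y) ≤ (h l + h (1 - l)) * (f x + f y) := by
  have hfx := hf.1 x hx
  have hfy := hf.1 y hy
  have hl := hh l hl₀ hl₁
  have hl' := hh (1 - l) (by linarith) (by linarith)
  nlinarith [hf.2 x hx y hy l hl₀ hl₁]

/-- For `α < 1` the weight `u ^ (α - 1)` is unbounded near `0`; integrability comes from the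
majorant `u ^ (α - 1) * (h u + h (1 - u)) * (f x + f y)` given by `apply_combo_le`. -/
theorem intervalIntegrable_rpow_mul {α : ℝ} (hf : HConvexOn h s f) (hs : Convex ℝ s)
    (hh : ∀ l : ℝ, 0 < l → l < 1 → 0 < h l) (hx : x ∈ s) (hy : y ∈ s)
    (hseg : IntervalIntegrable (fun u => f (u * x + (1 - u) * y)) volume 0 1)
    (hw : IntervalIntegrable (fun u => u ^ (α - 1) * (h u + h (1 - u))) volume 0 1) :
    IntervalIntegrable (fun u => u ^ (α - 1) * f (u * x + (1 - u) * y)) volume 0 1 := by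
  refine .of_nonneg_of_le_Ioo zero_le_one (hw.mul_const (f x + f y))
    ((measurable_id.pow_const _).aestronglyMeasurable.mul hseg.def'.aestronglyMeasurable)
    (fun u hu => ?_) (fun u hu => ?_)
  · exact mul_nonneg (Real.rpow_nonneg hu.1.le _)
      (hf.1 _ (hs.mul_add_mul_mem hx hy hu.1.le hu.2.le))
  · rw [mul_assoc]
    exact mul_le_mul_of_nonneg_left (hf.apply_combo_le hh hx hy hu.1 hu.2)
      (Real.rpow_nonneg hu.1.le _)

end HConvexOn

theorem fractional_h_convex (a b α : ℝ) (f h : ℝ → ℝ)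
    (hab : a < b) (hα : 0 < α)
    (hhpos : ∀ l : ℝ, 0 < l → l < 1 → 0 < h l)
    (hhalf : 0 < h (1 / 2))
    (hnonneg : ∀ x ∈ Set.Icc a b, 0 ≤ f x)
    (hconv : ∀ x ∈ Set.Icc a b, ∀ y ∈ Set.Icc a b, ∀ l : ℝ, 0 < l → l < 1 →
      f (l * x + (1 - l) * y) ≤ h l * f x + h (1 - l) * f y)
    (hint : IntervalIntegrable f MeasureTheory.volume a b)
    (hinth : IntervalIntegrable (fun t => t ^ (α - 1) * (h t + h (1 - t)))
      MeasureTheory.volume 0 1) :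
    (1 / (α * h (1 / 2))) * f ((a + b) / 2) ≤ Real.Gamma α / (b - a) ^ α *
      ((1 / Real.Gamma α) * (∫ t in a..b, (b - t) ^ (α - 1) * f t) +
       (1 / Real.Gamma α) * (∫ t in a..b, (t - a) ^ (α - 1) * f t)) ∧
    Real.Gamma α / (b - a) ^ α *
      ((1 / Real.Gamma α) * (∫ t in a..b, (b - t) ^ (α - 1) * f t) +
       (1 / Real.Gamma α) * (∫ t in a..b, (t - a) ^ (α - 1) * f t)) ≤
    (f a + f b) * ∫ t in (0:ℝ)..1, t ^ (α - 1) * (h t + h (1 - t)) := by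
  have hf : HConvexOn h (Icc a b) f := ⟨hnonneg, hconv⟩
  have ha : a ∈ Icc a b := left_mem_Icc.2 hab.le
  have hb : b ∈ Icc a b := right_mem_Icc.2 hab.le
  have hp := hf.intervalIntegrable_rpow_mul (convex_Icc a b) hhpos hb ha
    (hint.comp_segment hab.ne) hinth
  have hq := hf.intervalIntegrable_rpow_mul (convex_Icc a b) hhpos ha hb
    (hint.symm.comp_segment hab.ne') hinth
  have hcancel (X : ℝ) :
      Real.Gamma α / (b - a) ^ α * (1 / Real.Gamma α * ((b - a) ^ α * X)) = X := by
    have := (Real.Gamma_pos_of_pos hα).ne'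
    have := (Real.rpow_pos_of_pos (sub_pos.2 hab) α).ne'
    field_simp
  rw [← mul_add, integral_upper_sub_rpow_mul_add_integral_sub_lower_rpow_mul α f hab hq hp,
    hcancel]
  constructor
  · calc 1 / (α * h (1 / 2)) * f ((a + b) / 2)
          = ∫ u in (0 : ℝ)..1, u ^ (α - 1) * (f ((a + b) / 2) / h (1 / 2)) := by
            rw [intervalIntegral.integral_mul_const, integral_zero_one_rpow_sub_one hα]
            field_simp
      _ ≤ _ := by
        refine integral_mono_on zero_le_one
          ((intervalIntegrable_rpow' (by linarith)).mul_const _) (hq.add hp) fun u hu => ?_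
        rw [← mul_add]
        refine mul_le_mul_of_nonneg_left ?_ (Real.rpow_nonneg hu.1 _)
        rw [div_le_iff₀' hhalf]
        exact hf.midpoint_le_apply_combo_add_apply_combo (convex_Icc a b) ha hb hu.1 hu.2
  · calc _ ≤ ∫ u in (0 : ℝ)..1, u ^ (α - 1) * (h u + h (1 - u)) * (f a + f b) := by
          refine integral_mono_on_of_le_Ioo zero_le_one (hq.add hp) (hinth.mul_const _)
            fun u hu => ?_
          rw [← mul_add, mul_assoc]
          exact mul_le_mul_of_nonneg_left
            (hf.apply_combo_add_apply_combo_le ha hb hu.1 hu.2) (Real.rpow_nonneg hu.1.le _)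
      _ = _ := by rw [intervalIntegral.integral_mul_const, mul_comm]
end
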